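/- Every finite word w has at least |w|+1 distinct complete return factors. -/

import Mathlib

/-- Number of occurrences of `u` as a factor of `w` (positions are 0-indexed). -/
noncomputable def occCount {A : Type*} (u w : List A) : ℕ :=
  Set.ncard {i : ℕ | i + u.length ≤ w.length ∧ (w.drop i).take u.length = u}

/-- `v` is a complete first return to `u`: `u` is a prefix and a suffix of `v`,
and `u` has exactly two occurrences in `v`. -/
def IsCompleteFirstReturn {A : Type*} (v u : List A) : Prop :=
  u <+: v ∧ u <:+ v ∧ occCount u v = 2

/-- Privileged words: the empty word and the single letters are privileged, and a word of
length at least 2 is privileged if it is a complete first return to a shorter privileged word. -/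
inductive Privileged {A : Type*} : List A → Prop where
  | nil : Privileged ([] : List A)
  | single (a : A) : Privileged [a]
  | ret (w u : List A) : 2 ≤ w.length → u.length < w.length → Privileged u →
      IsCompleteFirstReturn w u → Privileged w

/-- A complete return word: a complete first return to some word
(the empty word counted by convention; letters are complete first returns to the empty word). -/
def IsCompleteReturnWord {A : Type*} (v : List A) : Prop :=
  v = [] ∨ ∃ u : List A, IsCompleteFirstReturn v u

/-- Position `i` of `w` (1-based, `1 ≤ i ≤ |w|`) introduces the factor `u`:
`u` occurs in `w` ending at position `i` and `u` occurs exactly once in the prefix `w[1,i]`. -/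
def Introduces {A : Type*} (w : List A) (i : ℕ) (u : List A) : Prop :=
  1 ≤ i ∧ i ≤ w.length ∧ u <:+ w.take i ∧ occCount u (w.take i) = 1

/-- A finite word is rich if it has exactly `|w| + 1` distinct palindromic factors. -/
noncomputable def RichWord {A : Type*} (w : List A) : Prop :=
  Set.ncard {u : List A | u <:+: w ∧ u.reverse = u} = w.length + 1

/-- `u` is a (finite) factor of the infinite word `w`. -/
def IsFactorInf {A : Type*} (w : ℕ → A) (u : List A) : Prop :=
  ∃ i : ℕ, u = (List.range u.length).map fun k => w (i + k)

/-- A Q-property of finite words. -/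
structure IsQProperty {A : Type*} (Q : List A → Prop) : Prop where
  q_nil : Q []
  q_single : ∀ a : A, Q [a]
  ends_at_every_position : ∀ (w : List A) (i : ℕ), 1 ≤ i → i ≤ w.length →
    ∃ u : List A, u ≠ [] ∧ u <:+ w.take i ∧ Q u
  introduces_at_most_one : ∀ (w : List A) (i : ℕ) (u v : List A),
    Introduces w i u → Introduces w i v → Q u → Q v → u = v

/-- Q-complexity of an infinite word: the number of distinct factors of length `n`
having property `Q`. -/
noncomputable def qComplexityInf {A : Type*} (w : ℕ → A) (Q : List A → Prop) (n : ℕ) : ℕ :=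
  Set.ncard {u : List A | IsFactorInf w u ∧ Q u ∧ u.length = n}

/-- Privileged complexity of an infinite word. -/
noncomputable def privComplexityInf {A : Type*} (w : ℕ → A) (n : ℕ) : ℕ :=
  Set.ncard {u : List A | IsFactorInf w u ∧ Privileged u ∧ u.length = n}

/-- Palindromic complexity of an infinite word. -/
noncomputable def palComplexityInf {A : Type*} (w : ℕ → A) (n : ℕ) : ℕ :=
  Set.ncard {u : List A | IsFactorInf w u ∧ u.reverse = u ∧ u.length = n}

/-- An infinite word is ultimately periodic if it is of the form `u v v v ⋯`
with `v` nonempty. -/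
def UltimatelyPeriodic {A : Type*} (w : ℕ → A) : Prop :=
  ∃ u v : List A, v ≠ [] ∧ ∀ n : ℕ, w n =
    if n < u.length then u.getD n (w 0)
    else v.getD ((n - u.length) % v.length) (w 0)

/-- An infinite word is Sturmian if it has exactly `n + 1` distinct factors of
length `n` for every `n`. -/
def Sturmian {A : Type*} (w : ℕ → A) : Prop :=
  ∀ n : ℕ, Set.ncard {u : List A | IsFactorInf w u ∧ u.length = n} = n + 1

/-- A finite binary word is balanced: its set of factors is balanced. -/
def BalancedWord (x : List Bool) : Prop :=
  ∀ u v : List Bool, u <:+: x → v <:+: x → u.length = v.length →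
    ((u.count true : ℤ) - (v.count true : ℤ)).natAbs ≤ 1

/-- `u` is a right special factor of the infinite word `w`. -/
def RightSpecial {A : Type*} (w : ℕ → A) (u : List A) : Prop :=
  ∃ a b : A, a ≠ b ∧ IsFactorInf w (u ++ [a]) ∧ IsFactorInf w (u ++ [b])

/-- The Thue-Morse word: the `n`-th letter is the parity of the number of ones in the
binary expansion of `n` (`false` = 0, `true` = 1). -/
def thueMorse (n : ℕ) : Bool := (Nat.digits 2 n).count 1 % 2 == 1

/-! For a prefix `p` of `w`, let `v` be the longest suffix of `p` occurring at least twice in `p`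
(the empty word qualifies when `p ≠ []`) and let `u` be the suffix of `p` starting at the last
occurrence of `v` before the final one. Then `u` is a complete first return to `v`, and as a suffix
longer than `v` it occurs only once in `p`. A word that occurs once in a prefix, as its suffix, is
not a suffix of any longer prefix, so the `|w| + 1` prefixes of `w` yield `|w| + 1` distinct
complete return factors. -/

section Occurrences

variable {A : Type*}

def OccursAt (u p : List A) (i : ℕ) : Prop :=
  i + u.length ≤ p.length ∧ (p.drop i).take u.length = u

theorem occCount_eq_ncard (u p : List A) : occCount u p = {i | OccursAt u p i}.ncard := rfl

theorem OccursAt.add_length_le {u p : List A} {i : ℕ} (h : OccursAt u p i) :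
    i + u.length ≤ p.length :=
  h.1

theorem occursAt_iff {u p : List A} {i : ℕ} :
    OccursAt u p i ↔ ∃ s t : List A, p = s ++ u ++ t ∧ s.length = i := by
  constructor
  · rintro ⟨hle, htake⟩
    refine ⟨p.take i, p.drop (i + u.length), ?_, by simp; omega⟩
    conv_lhs => rw [← List.take_append_drop i p, ← List.take_append_drop u.length (p.drop i)]
    rw [htake, List.drop_drop, List.append_assoc]
  · rintro ⟨s, t, rfl, rfl⟩
    exact ⟨by simp, by rw [List.append_assoc, List.drop_left, List.take_left]⟩

theorem occursAt_zero_iff {u p : List A} : OccursAt u p 0 ↔ u <+: p := by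
  rw [occursAt_iff]
  constructor
  · rintro ⟨s, t, rfl, hs⟩
    simp [List.eq_nil_of_length_eq_zero hs]
  · rintro ⟨t, rfl⟩
    exact ⟨[], t, rfl, rfl⟩

theorem occursAt_of_isSuffix {u p : List A} (h : u <:+ p) :
    OccursAt u p (p.length - u.length) := by
  obtain ⟨s, rfl⟩ := h
  exact occursAt_iff.mpr ⟨s, [], by simp, by simp⟩

theorem OccursAt.of_isPrefix {u q p : List A} {i : ℕ} (h : OccursAt u q i) (hqp : q <+: p) :
    OccursAt u p i := by
  obtain ⟨r, rfl⟩ := hqp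
  obtain ⟨s, t, rfl, rfl⟩ := occursAt_iff.mp h
  exact occursAt_iff.mpr ⟨s, t ++ r, by simp, rfl⟩

theorem occursAt_drop_iff {u p : List A} {j k : ℕ} (hj : j ≤ p.length) :
    OccursAt u (p.drop j) k ↔ OccursAt u p (j + k) := by
  simp only [OccursAt, List.length_drop, List.drop_drop]
  constructor <;> rintro ⟨hle, htake⟩ <;> exact ⟨by omega, htake⟩

theorem finite_setOf_occursAt (u p : List A) : {i | OccursAt u p i}.Finite :=
  (Set.finite_Iic p.length).subset fun _ hi => by
    simpa using (Nat.le_add_right _ _).trans hi.add_length_le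

theorem occCount_pos_of_isSuffix {u p : List A} (h : u <:+ p) : 0 < occCount u p :=
  (Set.ncard_pos (finite_setOf_occursAt u p)).mpr ⟨_, occursAt_of_isSuffix h⟩

theorem two_le_occCount {u p : List A} {i j : ℕ} (hi : OccursAt u p i) (hj : OccursAt u p j)
    (hij : i ≠ j) : 2 ≤ occCount u p :=
  (Set.one_lt_ncard_iff (finite_setOf_occursAt u p)).mpr ⟨i, j, hi, hj, hij⟩

theorem occCount_self (p : List A) : occCount p p = 1 := by
  rw [occCount_eq_ncard, Set.ncard_eq_one]
  refine ⟨0, Set.ext fun i => ⟨fun h => ?_, fun h => ?_⟩⟩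
  · have := h.add_length_le
    simp only [Set.mem_singleton_iff]
    omega
  · rw [Set.mem_singleton_iff.mp h]
    exact occursAt_zero_iff.mpr List.prefix_rfl

theorem occCount_nil (p : List A) : occCount [] p = p.length + 1 := by
  have : {i | OccursAt [] p i} = Set.Iic p.length := by
    ext i
    simp [OccursAt]
  rw [occCount_eq_ncard, this]
  simp

theorem two_le_occCount_of_isSuffix_of_isPrefix {u q p : List A} (huq : u <:+ q) (hqp : q <+: p)
    (hlt : q.length < p.length) (hup : u <:+ p) : 2 ≤ occCount u p :=
  two_le_occCount ((occursAt_of_isSuffix huq).of_isPrefix hqp) (occursAt_of_isSuffix hup)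
    (by have := huq.length_le; omega)

end Occurrences

section CompleteReturns

variable {A : Type*}

theorem exists_longest_repeated_suffix {p : List A} (hp : p ≠ []) :
    ∃ v, v <:+ p ∧ 2 ≤ occCount v p ∧ ∀ u, u <:+ p → v.length < u.length → occCount u p < 2 := by
  classical
  have hex : ∃ k, 2 ≤ occCount (p.drop k) p := ⟨p.length, by
    rw [List.drop_length, occCount_nil, Nat.succ_le_succ_iff, Nat.one_le_iff_ne_zero]
    exact mt List.length_eq_zero_iff.mp hp⟩
  refine ⟨p.drop (Nat.find hex), List.drop_suffix _ _, Nat.find_spec hex, fun u hu hlt => ?_⟩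
  have hlt' : p.length - Nat.find hex < u.length := by simpa using hlt
  have := hu.length_le
  rw [List.suffix_iff_eq_drop.mp hu]
  exact lt_of_not_ge (Nat.find_min hex (by omega))

theorem exists_last_earlier_occursAt {v p : List A} (h2 : 2 ≤ occCount v p) :
    ∃ j, OccursAt v p j ∧ j < p.length - v.length ∧
      ∀ k, OccursAt v p k → j < k → k = p.length - v.length := by
  classical
  set m := p.length - v.length
  have hle : ∀ k, OccursAt v p k → k ≤ m := fun k hk => by have := hk.add_length_le; omega
  have hearlier : ∃ i, OccursAt v p i ∧ i < m := by
    by_contra! hnone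
    have hsub : {i | OccursAt v p i} ⊆ {m} := fun i hi =>
      le_antisymm (hle i hi) (hnone i hi)
    have := Set.ncard_le_ncard hsub
    rw [Set.ncard_singleton, ← occCount_eq_ncard] at this
    omega
  obtain ⟨i, hi, him⟩ := hearlier
  let P : ℕ → Prop := fun k => OccursAt v p k ∧ k < m
  have hj : P (Nat.findGreatest P m) := Nat.findGreatest_spec him.le ⟨hi, him⟩
  refine ⟨Nat.findGreatest P m, hj.1, hj.2, fun k hk hjk => ?_⟩
  by_contra hkm
  have := Nat.le_findGreatest (hle k hk) (show P k from ⟨hk, lt_of_le_of_ne (hle k hk) hkm⟩)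
  omega

theorem isCompleteFirstReturn_drop {v p : List A} {j : ℕ} (hv : v <:+ p) (hj : OccursAt v p j)
    (hjlt : j < p.length - v.length)
    (hnext : ∀ k, OccursAt v p k → j < k → k = p.length - v.length) :
    IsCompleteFirstReturn (p.drop j) v := by
  have hjp : j ≤ p.length := by omega
  refine ⟨?_, ?_, ?_⟩
  · exact occursAt_zero_iff.mp ((occursAt_drop_iff hjp).mpr hj)
  · exact List.suffix_of_suffix_length_le hv (List.drop_suffix _ _) (by simp; omega)
  · have : {k | OccursAt v (p.drop j) k} = {0, p.length - v.length - j} := by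
      ext k
      simp only [Set.mem_ofPred_eq, Set.mem_insert_iff, Set.mem_singleton_iff,
        occursAt_drop_iff hjp]
      constructor
      · intro hk
        rcases Nat.eq_zero_or_pos k with hk0 | hkpos
        · exact Or.inl hk0
        · exact Or.inr (by have := hnext _ hk (by omega); omega)
      · rintro (rfl | rfl)
        · exact hj
        · convert occursAt_of_isSuffix hv using 1
          omega
    rw [occCount_eq_ncard, this, Set.ncard_pair (by omega)]

theorem exists_isCompleteReturnWord_isSuffix_occCount_eq_one (p : List A) :
    ∃ u, u <:+ p ∧ IsCompleteReturnWord u ∧ occCount u p = 1 := by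
  rcases eq_or_ne p [] with rfl | hp
  · exact ⟨[], List.suffix_rfl, Or.inl rfl, occCount_self []⟩
  obtain ⟨v, hv, hv2, hlonger⟩ := exists_longest_repeated_suffix hp
  obtain ⟨j, hj, hjlt, hnext⟩ := exists_last_earlier_occursAt hv2
  have hsuf : p.drop j <:+ p := List.drop_suffix _ _
  have hunique : occCount (p.drop j) p < 2 := hlonger _ hsuf (by simp; omega)
  exact ⟨p.drop j, hsuf, Or.inr ⟨v, isCompleteFirstReturn_drop hv hj hjlt hnext⟩,
    by have := occCount_pos_of_isSuffix hsuf; omega⟩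

end CompleteReturns

/-- Every finite word `w` has at least `|w| + 1` distinct complete
return factors. -/
theorem at_least_length_succ_complete_return_factors {A : Type*} (w : List A) :
    w.length + 1 ≤ Set.ncard {u : List A | u <:+: w ∧ IsCompleteReturnWord u} := by
  choose f hsuf hret hocc using
    fun i => exists_isCompleteReturnWord_isSuffix_occCount_eq_one (w.take i)
  have hmaps : ∀ i ∈ Set.Iic w.length, f i ∈ {u : List A | u <:+: w ∧ IsCompleteReturnWord u} :=
    fun i _ => ⟨(hsuf i).isInfix.trans (List.take_prefix i w).isInfix, hret i⟩
  have hinj : Set.InjOn f (Set.Iic w.length) := by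
    have hdistinct : ∀ i j, i < j → j ≤ w.length → f i ≠ f j := fun i j hij hj heq => by
      have hprefix : w.take i <+: w.take j :=
        List.prefix_take_iff.mpr ⟨List.take_prefix i w, by simp; omega⟩
      have := two_le_occCount_of_isSuffix_of_isPrefix (heq ▸ hsuf i) hprefix (by simp; omega)
        (hsuf j)
      have := hocc j
      omega
    intro i hi j hj heq
    rcases lt_trichotomy i j with hij | rfl | hji
    · exact absurd heq (hdistinct i j hij hj)
    · rfl
    · exact absurd heq.symm (hdistinct j i hji hi)
  have hfin : {u : List A | u <:+: w ∧ IsCompleteReturnWord u}.Finite :=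
    w.sublists.finite_toSet.subset fun u hu => List.mem_sublists.mpr hu.1.sublist
  simpa using Set.ncard_le_ncard_of_injOn f hmaps hinj hfin
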